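/- arXiv:0905.2491 — 3 statements merged into one kernel-verified Lean document; each statement's English description precedes it below -/
import Mathlib

section
/- For every real a ≥ 0, ∫_{−b}^{b} e^{a y²/2} / √(b² − y²) dy = π e^{a b²/4} I₀(a b²/4) for all b > 0, where I₀ is the modified Bessel function of the first kind of order 0. -/
open MeasureTheory Real

/-- Modified Bessel function of the first kind of order 0,
`I₀(x) = (1/(2π))∫_0^{2π} exp(x cos φ) dφ`. -/
noncomputable def besselI0 (x : ℝ) : ℝ :=
  (1 / (2 * Real.pi)) * ∫ φ in (0:ℝ)..(2 * Real.pi), Real.exp (x * Real.cos φ)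

theorem integral_exp_sq_div_sqrt (a : ℝ) (ha : 0 ≤ a) (b : ℝ) (hb : 0 < b) :
    (∫ y in (-b)..b, Real.exp (a * y ^ 2 / 2) / Real.sqrt (b ^ 2 - y ^ 2))
      = Real.pi * Real.exp (a * b ^ 2 / 4) * besselI0 (a * b ^ 2 / 4) := by
  have hpi : (0:ℝ) < π := Real.pi_pos
  set c : ℝ := a * b ^ 2 / 4 with hc
  set s : Set ℝ := Set.Ioo (-(π/2)) (π/2) with hs
  set g : ℝ → ℝ := fun y => Real.exp (a * y ^ 2 / 2) / Real.sqrt (b ^ 2 - y ^ 2) with hg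
  -- image of s under b * sin
  have himage : (fun θ => b * Real.sin θ) '' s = Set.Ioo (-b) b := by
    ext y
    constructor
    · rintro ⟨θ, hθ, rfl⟩
      have h1 : Real.sin θ < Real.sin (π/2) :=
        Real.strictMonoOn_sin (Set.mem_Icc_of_Ioo hθ)
          ⟨by linarith [hθ.1, hθ.2], le_refl _⟩ hθ.2
      have h2 : Real.sin (-(π/2)) < Real.sin θ :=
        Real.strictMonoOn_sin ⟨le_refl _, by linarith [hθ.1, hθ.2]⟩
          (Set.mem_Icc_of_Ioo hθ) hθ.1
      rw [Real.sin_pi_div_two] at h1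
      rw [Real.sin_neg, Real.sin_pi_div_two] at h2
      refine ⟨?_, ?_⟩
      · show -b < b * Real.sin θ; nlinarith
      · show b * Real.sin θ < b; nlinarith
    · rintro ⟨h1, h2⟩
      refine ⟨Real.arcsin (y / b), ?_, ?_⟩
      · constructor
        · rw [Real.neg_pi_div_two_lt_arcsin]
          rw [neg_lt, ← neg_div]
          exact (div_lt_one hb).2 (by linarith)
        · rw [Real.arcsin_lt_pi_div_two]
          exact (div_lt_one hb).2 h2
      · show b * Real.sin (Real.arcsin (y / b)) = y
        rw [Real.sin_arcsin (by rw [le_div_iff₀ hb]; linarith)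
          (by rw [div_le_one hb]; linarith)]
        field_simp
  have hinj : Set.InjOn (fun θ => b * Real.sin θ) s := by
    intro x hx y hy h
    exact Real.injOn_sin (Set.mem_Icc_of_Ioo hx) (Set.mem_Icc_of_Ioo hy)
      (mul_left_cancel₀ hb.ne' h)
  have hderiv : ∀ θ ∈ s, HasDerivWithinAt (fun θ => b * Real.sin θ) (b * Real.cos θ) s θ :=
    fun θ _ => ((Real.hasDerivAt_sin θ).const_mul b).hasDerivWithinAt
  -- change of variables
  have step1 : (∫ y in (-b)..b, g y) = ∫ θ in s, |b * Real.cos θ| • g (b * Real.sin θ) := by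
    rw [intervalIntegral.integral_of_le (by linarith),
      MeasureTheory.integral_Ioc_eq_integral_Ioo, ← himage,
      integral_image_eq_integral_abs_deriv_smul measurableSet_Ioo hderiv hinj]
  -- simplify the integrand on s
  have step2 : ∫ θ in s, |b * Real.cos θ| • g (b * Real.sin θ)
      = ∫ θ in s, Real.exp (c - c * Real.cos (2 * θ)) := by
    apply MeasureTheory.setIntegral_congr_fun measurableSet_Ioo
    intro θ hθ
    have hcos : 0 < Real.cos θ := Real.cos_pos_of_mem_Ioo hθ
    have hbc : 0 < b * Real.cos θ := mul_pos hb hcos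
    have hsqrt : Real.sqrt (b ^ 2 - (b * Real.sin θ) ^ 2) = b * Real.cos θ := by
      have : b ^ 2 - (b * Real.sin θ) ^ 2 = (b * Real.cos θ) ^ 2 := by
        have := Real.sin_sq_add_cos_sq θ
        ring_nf
        nlinarith [Real.sin_sq_add_cos_sq θ]
      rw [this, Real.sqrt_sq hbc.le]
    have hexp : a * (b * Real.sin θ) ^ 2 / 2 = c - c * Real.cos (2 * θ) := by
      have h := Real.sin_sq_eq_half_sub θ
      rw [hc]
      linear_combination (a * b ^ 2 / 2) * h
    simp only [hg, smul_eq_mul, hsqrt, abs_of_pos hbc, hexp]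
    field_simp
  -- back to interval integral and pull out the constant
  have step3 : (∫ θ in s, Real.exp (c - c * Real.cos (2 * θ)))
      = Real.exp c * ∫ θ in (-(π/2))..(π/2), Real.exp (-c * Real.cos (2 * θ)) := by
    rw [hs, ← MeasureTheory.integral_Ioc_eq_integral_Ioo,
      ← intervalIntegral.integral_of_le (by linarith), ← intervalIntegral.integral_const_mul]
    apply intervalIntegral.integral_congr
    intro θ _
    show Real.exp (c - c * Real.cos (2 * θ)) = Real.exp c * Real.exp (-c * Real.cos (2 * θ))
    rw [← Real.exp_add]
    ring_nf
  -- substitution u = 2θ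
  have step4 : (∫ θ in (-(π/2))..(π/2), Real.exp (-c * Real.cos (2 * θ)))
      = 2⁻¹ * ∫ u in (-π)..π, Real.exp (-c * Real.cos u) := by
    have := intervalIntegral.integral_comp_mul_left
      (fun u => Real.exp (-c * Real.cos u)) (two_ne_zero (α := ℝ))
      (a := -(π/2)) (b := π/2)
    have e1 : (2:ℝ) * -(π/2) = -π := by ring
    have e2 : (2:ℝ) * (π/2) = π := by ring
    rw [this, e1, e2, smul_eq_mul]
  -- periodicity
  have hper : Function.Periodic (fun u => Real.exp (-c * Real.cos u)) (2 * π) := by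
    intro u; simp [Real.cos_add_two_pi]
  have step5 : (∫ u in (-π)..π, Real.exp (-c * Real.cos u))
      = ∫ u in (0:ℝ)..(2*π), Real.exp (-c * Real.cos u) := by
    have h := hper.intervalIntegral_add_eq (-π) 0
    have e1 : -π + 2 * π = π := by ring
    rw [e1, zero_add] at h
    exact h
  -- flip sign of c via shift by π
  have step6 : (∫ u in (0:ℝ)..(2*π), Real.exp (-c * Real.cos u))
      = ∫ u in (0:ℝ)..(2*π), Real.exp (c * Real.cos u) := by
    have h := intervalIntegral.integral_comp_add_right
      (fun u => Real.exp (-c * Real.cos u)) π (a := -π) (b := π)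
    have e1 : -π + π = (0:ℝ) := by ring
    have e2 : π + π = 2 * π := by ring
    rw [e1, e2] at h
    have h2 : (∫ u in (-π)..π, Real.exp (-c * Real.cos (u + π)))
        = ∫ u in (-π)..π, Real.exp (c * Real.cos u) := by
      apply intervalIntegral.integral_congr
      intro u _
      show Real.exp (-c * Real.cos (u + π)) = Real.exp (c * Real.cos u)
      rw [Real.cos_add_pi]
      ring_nf
    have hper2 : Function.Periodic (fun u => Real.exp (c * Real.cos u)) (2 * π) := by
      intro u; simp [Real.cos_add_two_pi]
    have h3 := hper2.intervalIntegral_add_eq (-π) 0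
    have e3 : -π + 2 * π = π := by ring
    rw [e3, zero_add] at h3
    rw [← h, h2, h3]
  -- put everything together
  rw [step1, step2, step3, step4, step5, step6, besselI0]
  field_simp
end

section
/- For fixed δ > 0, the function ε ↦ (∫_0^1 z² I₀(δ√(1−z²)) e^{−ε z²/2} dz)/(∫_0^1 I₀(δ√(1−z²)) e^{−ε z²/2} dz) is strictly decreasing in ε on [0,∞). -/
open MeasureTheory Real

lemma besselI0_pos (x : ℝ) : 0 < besselI0 x := by
  have h2π : (0:ℝ) < 2 * Real.pi := by positivity
  apply mul_pos (by positivity)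
  exact intervalIntegral.intervalIntegral_pos_of_pos
    ((Real.continuous_exp.comp (continuous_const.mul Real.continuous_cos)).intervalIntegrable _ _)
    (fun φ => Real.exp_pos _) h2π

lemma besselI0_continuous : Continuous besselI0 := by
  apply continuous_const.mul
  exact intervalIntegral.continuous_parametric_intervalIntegral_of_continuous'
    (f := fun x φ => Real.exp (x * Real.cos φ)) (μ := volume)
    (by fun_prop) 0 (2 * Real.pi)

private lemma sq_integrableOn (F : ℝ × ℝ → ℝ) (hF : Continuous F) :
    IntegrableOn F (Set.Ioc (0:ℝ) 1 ×ˢ Set.Ioc (0:ℝ) 1) ((volume : Measure ℝ).prod volume) := by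
  have : IntegrableOn F (Set.Icc (0:ℝ) 1 ×ˢ Set.Icc (0:ℝ) 1)
      ((volume : Measure ℝ).prod volume) := by
    rw [← Measure.volume_eq_prod]
    exact hF.continuousOn.integrableOn_compact (isCompact_Icc.prod isCompact_Icc)
  exact this.mono_set (Set.prod_mono Set.Ioc_subset_Icc_self Set.Ioc_subset_Icc_self)

private lemma key_ineq (w : ℝ → ℝ) (hw : Continuous w) (hwpos : ∀ z, 0 < w z)
    {ε₁ ε₂ : ℝ} (hε : ε₁ < ε₂) :
    (∫ z in Set.Ioc (0:ℝ) 1, z ^ 2 * w z * Real.exp (-ε₂ * z ^ 2 / 2)) *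
      (∫ z in Set.Ioc (0:ℝ) 1, w z * Real.exp (-ε₁ * z ^ 2 / 2)) <
    (∫ z in Set.Ioc (0:ℝ) 1, z ^ 2 * w z * Real.exp (-ε₁ * z ^ 2 / 2)) *
      (∫ z in Set.Ioc (0:ℝ) 1, w z * Real.exp (-ε₂ * z ^ 2 / 2)) := by
  set a : ℝ → ℝ := fun z => w z * Real.exp (-ε₁ * z ^ 2 / 2) with ha
  set b : ℝ → ℝ := fun z => w z * Real.exp (-ε₂ * z ^ 2 / 2) with hb
  have hacont : Continuous a := hw.mul (by fun_prop)
  have hbcont : Continuous b := hw.mul (by fun_prop)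
  set G : ℝ × ℝ → ℝ := fun p => (p.1 ^ 2 - p.2 ^ 2) * (a p.1 * b p.2 - b p.1 * a p.2) with hG
  set S : Set (ℝ × ℝ) := Set.Ioc (0:ℝ) 1 ×ˢ Set.Ioc (0:ℝ) 1 with hS
  set ν : Measure (ℝ × ℝ) := (volume : Measure ℝ).prod volume with hν
  -- sign analysis
  have hsign : ∀ x y : ℝ, x ^ 2 < y ^ 2 → 0 < G (x, y) := by
    intro x y hxy
    have hab : a x * b y - b x * a y = w x * w y *
        (Real.exp (-ε₁ * x ^ 2 / 2 + -ε₂ * y ^ 2 / 2) -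
          Real.exp (-ε₂ * x ^ 2 / 2 + -ε₁ * y ^ 2 / 2)) := by
      simp only [ha, hb, Real.exp_add]; ring
    have hexp : Real.exp (-ε₁ * x ^ 2 / 2 + -ε₂ * y ^ 2 / 2) <
        Real.exp (-ε₂ * x ^ 2 / 2 + -ε₁ * y ^ 2 / 2) :=
      Real.exp_lt_exp.mpr (by nlinarith)
    have h1 : a x * b y - b x * a y < 0 := by
      rw [hab]
      exact mul_neg_of_pos_of_neg (mul_pos (hwpos x) (hwpos y)) (by linarith)
    exact mul_pos_of_neg_of_neg (by simpa using sub_neg.mpr hxy) h1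
  have hnonneg : ∀ p : ℝ × ℝ, 0 ≤ G p := by
    rintro ⟨x, y⟩
    rcases lt_trichotomy (x ^ 2) (y ^ 2) with h | h | h
    · exact (hsign x y h).le
    · simp [hG, h]
    · have := hsign y x h
      have hswap : G (x, y) = G (y, x) := by simp only [hG]; ring
      rw [hswap]; exact this.le
  have hGcont : Continuous G := by fun_prop
  have hGint : IntegrableOn G S ν := sq_integrableOn G hGcont
  -- positivity of the double integral
  have hpos : 0 < ∫ p in S, G p ∂ν := by
    rw [integral_pos_iff_support_of_nonneg_ae (Filter.Eventually.of_forall hnonneg) hGint]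
    have hT : Set.Ioc (0:ℝ) 2⁻¹ ×ˢ Set.Ioc (2⁻¹:ℝ) 1 ⊆ Function.support G ∩ S := by
      rintro ⟨x, y⟩ ⟨hx, hy⟩
      constructor
      · have hxy : x ^ 2 < y ^ 2 := by
          have h1 : 0 < x := hx.1
          have h2 : x ≤ 2⁻¹ := hx.2
          have h3 : (2⁻¹:ℝ) < y := hy.1
          nlinarith
        exact Function.mem_support.mpr (hsign x y hxy).ne'
      · exact ⟨⟨hx.1, by linarith [hx.2]⟩, ⟨by linarith [hy.1], hy.2⟩⟩
    have hmeas : (ν.restrict S) (Set.Ioc (0:ℝ) 2⁻¹ ×ˢ Set.Ioc (2⁻¹:ℝ) 1) =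
        ν (Set.Ioc (0:ℝ) 2⁻¹ ×ˢ Set.Ioc (2⁻¹:ℝ) 1) := by
      rw [Measure.restrict_apply (measurableSet_Ioc.prod measurableSet_Ioc)]
      congr 1
      rw [Set.inter_eq_left]
      exact Set.prod_mono (Set.Ioc_subset_Ioc le_rfl (by norm_num))
        (Set.Ioc_subset_Ioc (by norm_num) le_rfl)
    calc (0:ENNReal) < ν (Set.Ioc (0:ℝ) 2⁻¹ ×ˢ Set.Ioc (2⁻¹:ℝ) 1) := by
          rw [hν, Measure.prod_prod, Real.volume_Ioc, Real.volume_Ioc]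
          norm_num
      _ = (ν.restrict S) (Set.Ioc (0:ℝ) 2⁻¹ ×ˢ Set.Ioc (2⁻¹:ℝ) 1) := hmeas.symm
      _ ≤ (ν.restrict S) (Function.support G) :=
          measure_mono fun p hp => (hT hp).1
  -- expand the double integral into products of single integrals
  set A₁ := ∫ z in Set.Ioc (0:ℝ) 1, z ^ 2 * a z
  set A₂ := ∫ z in Set.Ioc (0:ℝ) 1, z ^ 2 * b z
  set B₁ := ∫ z in Set.Ioc (0:ℝ) 1, a z
  set B₂ := ∫ z in Set.Ioc (0:ℝ) 1, b z
  set F1 : ℝ × ℝ → ℝ := fun p => (p.1 ^ 2 * a p.1) * b p.2 with hF1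
  set F2 : ℝ × ℝ → ℝ := fun p => (p.1 ^ 2 * b p.1) * a p.2 with hF2
  set F3 : ℝ × ℝ → ℝ := fun p => a p.1 * (p.2 ^ 2 * b p.2) with hF3
  set F4 : ℝ × ℝ → ℝ := fun p => b p.1 * (p.2 ^ 2 * a p.2) with hF4
  have i1 : IntegrableOn F1 S ν := sq_integrableOn _ (by fun_prop)
  have i2 : IntegrableOn F2 S ν := sq_integrableOn _ (by fun_prop)
  have i3 : IntegrableOn F3 S ν := sq_integrableOn _ (by fun_prop)
  have i4 : IntegrableOn F4 S ν := sq_integrableOn _ (by fun_prop)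
  have p1 : ∫ p in S, F1 p ∂ν = A₁ * B₂ := by
    rw [hF1, hS, hν]
    exact setIntegral_prod_mul (fun x => x ^ 2 * a x) b _ _
  have p2 : ∫ p in S, F2 p ∂ν = A₂ * B₁ := by
    rw [hF2, hS, hν]
    exact setIntegral_prod_mul (fun x => x ^ 2 * b x) a _ _
  have p3 : ∫ p in S, F3 p ∂ν = B₁ * A₂ := by
    rw [hF3, hS, hν]
    exact setIntegral_prod_mul a (fun y => y ^ 2 * b y) _ _
  have p4 : ∫ p in S, F4 p ∂ν = B₂ * A₁ := by
    rw [hF4, hS, hν]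
    exact setIntegral_prod_mul b (fun y => y ^ 2 * a y) _ _
  have hexpand : (∫ p in S, G p ∂ν) = 2 * (A₁ * B₂ - A₂ * B₁) := by
    have e1 : ∀ p : ℝ × ℝ, G p = F1 p - F2 p - (F3 p - F4 p) := by
      rintro ⟨x, y⟩
      simp only [hG, hF1, hF2, hF3, hF4]
      ring
    have h := integral_sub (μ := ν.restrict S) (i1.sub i2) (i3.sub i4)
    have h12 := integral_sub (μ := ν.restrict S) i1 i2
    have h34 := integral_sub (μ := ν.restrict S) i3 i4
    calc (∫ p in S, G p ∂ν) = ∫ p in S, (F1 p - F2 p - (F3 p - F4 p)) ∂ν :=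
          integral_congr_ae (Filter.Eventually.of_forall e1)
      _ = (∫ p in S, (F1 p - F2 p) ∂ν) - ∫ p in S, (F3 p - F4 p) ∂ν := by
          simpa [Pi.sub_apply] using h
      _ = ((∫ p in S, F1 p ∂ν) - ∫ p in S, F2 p ∂ν) -
          ((∫ p in S, F3 p ∂ν) - ∫ p in S, F4 p ∂ν) := by rw [h12, h34]
      _ = 2 * (A₁ * B₂ - A₂ * B₁) := by rw [p1, p2, p3, p4]; ring
  rw [hexpand] at hpos
  have : 0 < A₁ * B₂ - A₂ * B₁ := by linarith
  have heq : ∀ ε : ℝ, (fun z => z ^ 2 * w z * Real.exp (-ε * z ^ 2 / 2)) =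
      fun z => z ^ 2 * (w z * Real.exp (-ε * z ^ 2 / 2)) := by
    intro ε; funext z; ring
  calc (∫ z in Set.Ioc (0:ℝ) 1, z ^ 2 * w z * Real.exp (-ε₂ * z ^ 2 / 2)) *
        (∫ z in Set.Ioc (0:ℝ) 1, w z * Real.exp (-ε₁ * z ^ 2 / 2)) = A₂ * B₁ := by
        rw [heq ε₂]
    _ < A₁ * B₂ := by linarith
    _ = (∫ z in Set.Ioc (0:ℝ) 1, z ^ 2 * w z * Real.exp (-ε₁ * z ^ 2 / 2)) *
        (∫ z in Set.Ioc (0:ℝ) 1, w z * Real.exp (-ε₂ * z ^ 2 / 2)) := by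
        rw [heq ε₁]

theorem variance_strictly_decreasing_in_interaction (δ : ℝ) (hδ : 0 < δ) :
    StrictAntiOn (fun ε : ℝ =>
      (∫ z in (0:ℝ)..1, z ^ 2 * besselI0 (δ * Real.sqrt (1 - z ^ 2)) * Real.exp (-ε * z ^ 2 / 2)) /
        (∫ z in (0:ℝ)..1, besselI0 (δ * Real.sqrt (1 - z ^ 2)) * Real.exp (-ε * z ^ 2 / 2)))
      (Set.Ici (0:ℝ)) := by
  set w : ℝ → ℝ := fun z => besselI0 (δ * Real.sqrt (1 - z ^ 2)) with hwdef
  have hwcont : Continuous w :=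
    besselI0_continuous.comp (continuous_const.mul (continuous_sqrt.comp (by fun_prop)))
  have hwpos : ∀ z, 0 < w z := fun z => besselI0_pos _
  intro ε₁ hε₁ ε₂ hε₂ hε
  have hconv : ∀ ε : ℝ, ∀ f : ℝ → ℝ, (∫ z in (0:ℝ)..1, f z) = ∫ z in Set.Ioc (0:ℝ) 1, f z :=
    fun ε f => intervalIntegral.integral_of_le zero_le_one
  have hBpos : ∀ ε : ℝ, 0 < ∫ z in Set.Ioc (0:ℝ) 1, w z * Real.exp (-ε * z ^ 2 / 2) := by
    intro ε
    rw [← intervalIntegral.integral_of_le (zero_le_one (α := ℝ))]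
    exact intervalIntegral.intervalIntegral_pos_of_pos
      ((hwcont.mul (by fun_prop)).intervalIntegrable 0 1)
      (fun z => mul_pos (hwpos z) (Real.exp_pos _)) zero_lt_one
  simp only
  rw [hconv ε₁ _, hconv ε₁ _, hconv ε₂ _, hconv ε₂ _]
  rw [div_lt_div_iff₀ (hBpos ε₂) (hBpos ε₁)]
  exact key_ineq w hwcont hwpos hε
end

section
/- For all δ ≥ 0 and ε ≥ 0, the coherence factor α_{δ,ε} = (∫_{−1}^{1} x I₀(ε(1−x²)/4) e^{δx + εx²/4} dx)/(∫_{−1}^{1} I₀(ε(1−x²)/4) e^{δx + εx²/4} dx) satisfies 0 ≤ α_{δ,ε} < 1, with α_{δ,ε} = 0 iff δ = 0. -/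
open MeasureTheory Real

/-- Coherence factor of a bosonic Josephson junction in thermal equilibrium. -/
noncomputable def coherenceFactor (δ ε : ℝ) : ℝ :=
  (∫ x in (-1:ℝ)..1, x * besselI0 (ε * (1 - x ^ 2) / 4) * Real.exp (δ * x + ε * x ^ 2 / 4)) /
    (∫ x in (-1:ℝ)..1, besselI0 (ε * (1 - x ^ 2) / 4) * Real.exp (δ * x + ε * x ^ 2 / 4))

theorem coherence_factor_bounds (δ ε : ℝ) (hδ : 0 ≤ δ) (hε : 0 ≤ ε) :
    0 ≤ coherenceFactor δ ε ∧ coherenceFactor δ ε < 1 ∧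
      (coherenceFactor δ ε = 0 ↔ δ = 0) := by
  set F : ℝ → ℝ := fun x => besselI0 (ε * (1 - x ^ 2) / 4) * Real.exp (δ * x + ε * x ^ 2 / 4)
    with hF
  set G : ℝ → ℝ := fun x => x * F x with hG
  have hFc : Continuous F := by
    exact (besselI0_continuous.comp (by fun_prop)).mul (Real.continuous_exp.comp (by fun_prop))
  have hGc : Continuous G := continuous_id.mul hFc
  have hFpos : ∀ x, 0 < F x := fun x => mul_pos (besselI0_pos _) (Real.exp_pos _)
  set D := ∫ x in (-1:ℝ)..1, F x with hD
  set N := ∫ x in (-1:ℝ)..1, G x with hN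
  have hcf : coherenceFactor δ ε = N / D := by
    simp only [coherenceFactor, hN, hD, hG, hF, mul_assoc]
  have hDpos : 0 < D := by
    apply intervalIntegral.intervalIntegral_pos_of_pos (hFc.intervalIntegrable _ _)
      (fun x => hFpos x) (by norm_num)
  -- symmetrization
  have hGneg : ∀ x : ℝ, G (-x) =
      -(x * besselI0 (ε * (1 - x ^ 2) / 4) * Real.exp (δ * -x + ε * x ^ 2 / 4)) := by
    intro x; simp only [hG, hF, neg_sq]; ring
  have hsum : N + N = ∫ x in (-1:ℝ)..1, (G x + G (-x)) := by
    have h1 : (∫ x in (-1:ℝ)..1, G (-x)) = N := by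
      rw [intervalIntegral.integral_comp_neg]; norm_num; exact hN.symm
    have h2 : IntervalIntegrable (fun x => G (-x)) volume (-1) 1 :=
      ((hGc.comp continuous_neg : Continuous fun x => G (-x))).intervalIntegrable _ _
    rw [intervalIntegral.integral_add (hGc.intervalIntegrable _ _) h2, h1, ← hN]
  have hh_nonneg : ∀ x : ℝ, 0 ≤ G x + G (-x) := by
    intro x
    rw [hGneg]
    have hb := besselI0_pos (ε * (1 - x ^ 2) / 4)
    rcases le_total 0 x with hx | hx
    · have : Real.exp (δ * -x + ε * x ^ 2 / 4) ≤ Real.exp (δ * x + ε * x ^ 2 / 4) := by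
        apply Real.exp_le_exp.mpr; nlinarith
      simp only [hG, hF]
      nlinarith [mul_nonneg (mul_nonneg hx hb.le) (sub_nonneg.mpr this)]
    · have : Real.exp (δ * x + ε * x ^ 2 / 4) ≤ Real.exp (δ * -x + ε * x ^ 2 / 4) := by
        apply Real.exp_le_exp.mpr; nlinarith
      simp only [hG, hF]
      nlinarith [mul_nonneg (mul_nonneg (neg_nonneg.mpr hx) hb.le) (sub_nonneg.mpr this)]
  have hNnonneg : 0 ≤ N := by
    have := intervalIntegral.integral_nonneg (μ := volume) (a := (-1:ℝ)) (b := 1) (by norm_num)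
      (fun u _ => hh_nonneg u)
    rw [← hsum] at this; linarith
  -- N < D
  have hND : N < D := by
    have hpos : 0 < ∫ x in (-1:ℝ)..1, (F x - G x) := by
      apply intervalIntegral.intervalIntegral_pos_of_pos_on
        ((hFc.sub hGc).intervalIntegrable _ _)
      · intro x hx
        have h1 : x < 1 := hx.2
        have := hFpos x
        simp only [hG, Pi.sub_apply]; nlinarith [mul_pos (sub_pos.mpr h1) this]
      · norm_num
    rw [intervalIntegral.integral_sub (hFc.intervalIntegrable _ _)
      (hGc.intervalIntegrable _ _)] at hpos
    linarith
  have hhc : Continuous fun x => G x + G (-x) := hGc.add (hGc.comp continuous_neg)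
  -- N > 0 when δ > 0
  have hNpos : 0 < δ → 0 < N := by
    intro hδ'
    have hsplit : (∫ x in (-1:ℝ)..1, (G x + G (-x))) =
        (∫ x in (-1:ℝ)..0, (G x + G (-x))) + ∫ x in (0:ℝ)..1, (G x + G (-x)) :=
      (intervalIntegral.integral_add_adjacent_intervals (hhc.intervalIntegrable _ _)
        (hhc.intervalIntegrable _ _)).symm
    have h1 : 0 ≤ ∫ x in (-1:ℝ)..0, (G x + G (-x)) :=
      intervalIntegral.integral_nonneg (μ := volume) (by norm_num) (fun u _ => hh_nonneg u)
    have h2 : 0 < ∫ x in (0:ℝ)..1, (G x + G (-x)) := by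
      apply intervalIntegral.intervalIntegral_pos_of_pos_on (hhc.intervalIntegrable _ _)
        _ (by norm_num)
      intro x hx
      rw [hGneg]
      have hb := besselI0_pos (ε * (1 - x ^ 2) / 4)
      have hexp : Real.exp (δ * -x + ε * x ^ 2 / 4) < Real.exp (δ * x + ε * x ^ 2 / 4) := by
        apply Real.exp_lt_exp.mpr; nlinarith [hx.1]
      simp only [hG, hF]
      nlinarith [mul_pos (mul_pos hx.1 hb) (sub_pos.mpr hexp)]
    nlinarith [hsum, hsplit]
  -- N = 0 when δ = 0
  have hNzero : δ = 0 → N = 0 := by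
    intro h0
    have : ∀ x : ℝ, G x + G (-x) = 0 := by
      intro x; rw [hGneg]; simp only [hG, hF, h0]; ring_nf
    have h2 : N + N = 0 := by
      rw [hsum]; simp only [this, intervalIntegral.integral_zero]
    linarith
  refine ⟨by rw [hcf]; positivity, by rw [hcf]; exact (div_lt_one hDpos).mpr hND, ?_⟩
  constructor
  · intro h
    by_contra hne
    have hδ' : 0 < δ := lt_of_le_of_ne hδ (Ne.symm hne)
    have := hNpos hδ'
    rw [hcf, div_eq_zero_iff] at h
    rcases h with h | h
    · linarith
    · linarith
  · intro h0
    rw [hcf, hNzero h0, zero_div]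
end
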